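/- For each fixed L > 1/2, lim_{r→1⁻} I_L(r)/(1−r) = 4 ∫₀^∞ (1/((1+x²)^L − 1)) · (x²/(1+x²)) dx, where I_L(r) = ∫_{−π}^{π} ((1−r²)^{2L} / (|1−r²e^{iθ}|^{2L} − (1−r²)^{2L})) · (2(1−cos θ)/|1−r²e^{iθ}|²) dθ. -/

import Mathlib

open Filter

/-- The integral `I_L(r)` from the key lemma:
`∫_{−π}^{π} (1−r²)^{2L} / (|1−r²e^{iθ}|^{2L} − (1−r²)^{2L}) · 2(1−cos θ)/|1−r²e^{iθ}|² dθ`. -/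
noncomputable def hypIntegral (L r : ℝ) : ℝ :=
  ∫ θ in (-Real.pi)..Real.pi,
    (1 - r^2) ^ (2*L) /
        (‖1 - (r^2 : ℂ) * Complex.exp (θ * Complex.I)‖ ^ (2*L)
          - (1 - r^2) ^ (2*L)) *
      (2 * (1 - Real.cos θ) /
        ‖1 - (r^2 : ℂ) * Complex.exp (θ * Complex.I)‖ ^ (2:ℕ))

namespace HypAux

open Real MeasureTheory Set

/-- Bernoulli-type lower bound: `(1+t)^L - 1 ≥ L t / (1+t)`. -/
lemma bern {L t : ℝ} (hL : 0 < L) (ht : 0 ≤ t) : L * t / (1 + t) ≤ (1 + t) ^ L - 1 := by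
  have h1t : (0:ℝ) < 1 + t := by linarith
  have hB : 1 + (L + 1) * t ≤ (1 + t) ^ (L + 1) :=
    one_add_mul_self_le_rpow_one_add (by linarith) (by linarith)
  have hsplit : (1 + t) ^ (L + 1) = (1 + t) ^ L * (1 + t) := by
    rw [Real.rpow_add h1t, Real.rpow_one]
  rw [div_le_iff₀ h1t]
  nlinarith [hB, hsplit]

lemma jordan_low {t : ℝ} (h : |t| ≤ π) : 2 * t ^ 2 / 5 ≤ 2 * (1 - Real.cos t) := by
  have h1 : 1 - Real.cos t = 2 * Real.sin (t / 2) ^ 2 := by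
    have := Real.sin_sq_eq_half_sub (t / 2)
    have h2 : 2 * (t / 2) = t := by ring
    rw [h2] at this
    linarith
  have habs : |t / 2| ≤ π / 2 := by
    rw [abs_div, abs_two]
    exact div_le_div_of_nonneg_right h (by norm_num)
  have hj : 2 / π * |t / 2| ≤ |Real.sin (t / 2)| := Real.mul_abs_le_abs_sin habs
  have hsq : (2 / π) ^ 2 * (t / 2) ^ 2 ≤ Real.sin (t / 2) ^ 2 := by
    calc (2 / π) ^ 2 * (t / 2) ^ 2 = (2 / π * |t / 2|) ^ 2 := by
          rw [mul_pow, sq_abs]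
      _ ≤ |Real.sin (t / 2)| ^ 2 := by
          apply pow_le_pow_left₀ (by positivity) hj
      _ = Real.sin (t / 2) ^ 2 := sq_abs _
  have hpi : π ^ 2 ≤ 10 := by nlinarith [Real.pi_lt_d2, Real.pi_pos]
  have hpi0 : (0:ℝ) < π ^ 2 := by positivity
  have : t ^ 2 / 10 ≤ Real.sin (t / 2) ^ 2 := by
    have h4 : (2 / π) ^ 2 * (t / 2) ^ 2 = t ^ 2 / π ^ 2 := by
      field_simp
    rw [h4] at hsq
    calc t ^ 2 / 10 ≤ t ^ 2 / π ^ 2 := by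
          apply div_le_div_of_nonneg_left (by positivity) hpi0 hpi
      _ ≤ _ := hsq
  nlinarith

lemma cos_low (t : ℝ) : 2 * (1 - Real.cos t) ≤ t ^ 2 := by
  have h1 : 1 - Real.cos t = 2 * Real.sin (t / 2) ^ 2 := by
    have := Real.sin_sq_eq_half_sub (t / 2)
    have h2 : 2 * (t / 2) = t := by ring
    rw [h2] at this; linarith
  have := Real.sin_sq_le_sq (x := t / 2)
  nlinarith

noncomputable def G (L r θ : ℝ) : ℝ :=
  ((1 - r^2)^2) ^ L / (((1 - r^2)^2 + 2*r^2*(1 - Real.cos θ)) ^ L - ((1 - r^2)^2) ^ L) *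
    (2*(1 - Real.cos θ) / ((1 - r^2)^2 + 2*r^2*(1 - Real.cos θ)))

noncomputable def F (L r x : ℝ) : ℝ := G L r ((1 - r^2) * x)

noncomputable def FI (L r : ℝ) : ℝ → ℝ :=
  (Set.Ioc (-(π/(1 - r^2))) (π/(1 - r^2))).indicator (F L r)

noncomputable def u (r x : ℝ) : ℝ := 2*(1 - Real.cos ((1 - r^2)*x)) / (1 - r^2)^2

noncomputable def philim (L x : ℝ) : ℝ := 1/((1 + x^2) ^ L - 1) * (x^2/(1 + x^2))

noncomputable def g (L x : ℝ) : ℝ := 1/((1 + x^2/10) ^ L - 1) * min (x^2) 4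

lemma u_nonneg {r : ℝ} (x : ℝ) : 0 ≤ u r x := by
  unfold u
  apply div_nonneg _ (by positivity)
  have := Real.cos_le_one ((1 - r^2)*x)
  linarith

lemma A_eq {r : ℝ} (hr : r^2 < 1) (x : ℝ) :
    (1 - r^2)^2 + 2*r^2*(1 - Real.cos ((1 - r^2)*x)) = (1 - r^2)^2 * (1 + r^2 * u r x) := by
  have hs : (1 - r^2) ≠ 0 := by nlinarith
  unfold u
  field_simp

lemma F_eq {L r : ℝ} (hr : r^2 < 1) (x : ℝ) :
    F L r x = 1/((1 + r^2 * u r x) ^ L - 1) * (u r x / (1 + r^2 * u r x)) := by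
  have hs2 : (0:ℝ) < (1 - r^2)^2 := by nlinarith
  have h1u : (0:ℝ) ≤ 1 + r^2 * u r x := by
    have := u_nonneg (r := r) x; positivity
  have hA := A_eq hr x
  have hmul : ((1 - r^2)^2 * (1 + r^2 * u r x)) ^ L = ((1 - r^2)^2) ^ L * (1 + r^2 * u r x) ^ L :=
    Real.mul_rpow hs2.le h1u
  have hnum : 2*(1 - Real.cos ((1 - r^2)*x)) = (1 - r^2)^2 * u r x := by
    unfold u; rw [mul_div_assoc', eq_div_iff hs2.ne']; ring
  have haL : (0:ℝ) < ((1 - r^2)^2) ^ L := Real.rpow_pos_of_pos hs2 L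
  unfold F G
  rw [hA, hmul, hnum]
  congr 1
  · rw [← mul_sub_one, ← div_div, div_self haL.ne']
  · rw [mul_div_mul_left _ _ hs2.ne']

lemma abs_sq (r θ : ℝ) :
    ‖1 - (r^2 : ℂ) * Complex.exp (θ * Complex.I)‖ ^ (2:ℕ)
      = (1 - r^2)^2 + 2*r^2*(1 - Real.cos θ) := by
  have hz : (1 - (r^2 : ℂ) * Complex.exp (θ * Complex.I))
      = Complex.ofReal (1 - r^2 * Real.cos θ) + Complex.ofReal (-(r^2 * Real.sin θ)) * Complex.I := by
    rw [Complex.exp_mul_I]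
    push_cast [← Complex.ofReal_cos, ← Complex.ofReal_sin]
    ring
  rw [Complex.sq_norm, hz, Complex.normSq_add_mul_I]
  nlinarith [Real.sin_sq_add_cos_sq θ]

lemma abs_rpow (L r θ : ℝ) :
    ‖1 - (r^2 : ℂ) * Complex.exp (θ * Complex.I)‖ ^ (2*L)
      = ((1 - r^2)^2 + 2*r^2*(1 - Real.cos θ)) ^ L := by
  rw [← abs_sq r θ, ← Real.rpow_natCast (‖_‖) 2, ← Real.rpow_mul (by positivity)]
  norm_num

lemma base_rpow (L r : ℝ) (hr : r^2 ≤ 1) :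
    (1 - r^2) ^ (2*L) = ((1 - r^2)^2) ^ L := by
  rw [← Real.rpow_natCast (1 - r^2) 2, ← Real.rpow_mul (by linarith)]
  norm_num

lemma hyp_eq {L r : ℝ} (hr : r ∈ Set.Ioo (0:ℝ) 1) :
    hypIntegral L r = (1 - r^2) * ∫ x, FI L r x := by
  obtain ⟨hr0, hr1⟩ := hr
  have hs : (0:ℝ) < 1 - r^2 := by nlinarith
  have h1 : hypIntegral L r = ∫ θ in (-π)..π, G L r θ := by
    unfold hypIntegral G
    refine intervalIntegral.integral_congr fun θ _ => ?_
    rw [abs_sq, abs_rpow, base_rpow L r (by nlinarith)]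
  have h2 : (∫ x in (-(π/(1 - r^2)))..(π/(1 - r^2)), F L r x)
      = (1 - r^2)⁻¹ • ∫ θ in (-π)..π, G L r θ := by
    have := intervalIntegral.integral_comp_mul_left (a := -(π/(1 - r^2)))
      (b := π/(1 - r^2)) (f := G L r) (c := 1 - r^2) hs.ne'
    rw [show (1 - r^2) * -(π/(1 - r^2)) = -π by field_simp,
        show (1 - r^2) * (π/(1 - r^2)) = π by field_simp] at this
    exact this
  have h3 : (∫ x in (-(π/(1 - r^2)))..(π/(1 - r^2)), F L r x) = ∫ x, FI L r x := by
    have hle : -(π/(1 - r^2)) ≤ π/(1 - r^2) := by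
      have : (0:ℝ) < π/(1 - r^2) := by positivity
      linarith
    rw [intervalIntegral.integral_of_le hle, ← MeasureTheory.integral_indicator measurableSet_Ioc]
    rfl
  rw [h1, ← h3, h2, smul_eq_mul, ← mul_assoc, mul_inv_cancel₀ hs.ne', one_mul]

lemma meas_F {L r : ℝ} (hr : r^2 < 1) : Measurable (F L r) := by
  unfold F G
  have hs2 : (0:ℝ) < (1 - r^2)^2 := by nlinarith
  have hA : Continuous fun x : ℝ => (1 - r^2)^2 + 2*r^2*(1 - Real.cos ((1 - r^2)*x)) := by
    fun_prop
  have hApos : ∀ x : ℝ, (0:ℝ) < (1 - r^2)^2 + 2*r^2*(1 - Real.cos ((1 - r^2)*x)) := by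
    intro x
    have := Real.cos_le_one ((1 - r^2)*x)
    nlinarith [sq_nonneg r]
  have hAL : Measurable fun x : ℝ => ((1 - r^2)^2 + 2*r^2*(1 - Real.cos ((1 - r^2)*x))) ^ L :=
    (hA.rpow_const fun x => Or.inl (hApos x).ne').measurable
  exact (measurable_const.div (hAL.sub measurable_const)).mul
    ((measurable_const.mul ((measurable_const.sub (Real.measurable_cos.comp (by fun_prop))))).div hA.measurable)

lemma meas_FI {L r : ℝ} (hr : r^2 < 1) : Measurable (FI L r) :=
  (meas_F hr).indicator measurableSet_Ioc

lemma meas_g (L : ℝ) : Measurable (g L) := by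
  unfold g
  have hb : Continuous fun x : ℝ => 1 + x^2/10 := by fun_prop
  have h1 : Measurable fun x : ℝ => (1 + x^2/10) ^ L :=
    (hb.rpow_const fun x => Or.inl (by positivity)).measurable
  exact (measurable_const.div (h1.sub measurable_const)).mul (by fun_prop)

lemma g_nonneg {L : ℝ} (hL : 0 < L) (x : ℝ) : 0 ≤ g L x := by
  unfold g
  have h1 : (1:ℝ) ≤ (1 + x^2/10) ^ L := Real.one_le_rpow (by nlinarith [sq_nonneg x]) hL.le
  have h2 : (0:ℝ) ≤ min (x^2) 4 := le_min (sq_nonneg x) (by norm_num)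
  exact mul_nonneg (div_nonneg one_pos.le (by linarith)) h2

lemma FI_bound {L r : ℝ} (hL : 0 < L) (hr : r ∈ Set.Ioo (1/2 : ℝ) 1) (x : ℝ) :
    ‖FI L r x‖ ≤ g L x := by
  obtain ⟨hr12, hr1⟩ := hr
  have hr0 : (0:ℝ) < r := by linarith
  have hr2 : r^2 < 1 := by nlinarith
  have hr2q : (1/4 : ℝ) ≤ r^2 := by nlinarith
  have hs : (0:ℝ) < 1 - r^2 := by linarith
  unfold FI
  by_cases hx : x ∈ Set.Ioc (-(π/(1 - r^2))) (π/(1 - r^2))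
  · rw [Set.indicator_of_mem hx]
    have habsx : |x| ≤ π/(1 - r^2) := abs_le.2 ⟨by linarith [hx.1], hx.2⟩
    have habs : |(1 - r^2)*x| ≤ π := by
      rw [abs_mul, abs_of_pos hs]
      calc (1 - r^2) * |x| ≤ (1 - r^2) * (π/(1 - r^2)) := by
            exact mul_le_mul_of_nonneg_left habsx hs.le
        _ = π := by field_simp
    have ht0 : 0 ≤ u r x := u_nonneg x
    have hlow : 2*x^2/5 ≤ u r x := by
      have hj := jordan_low habs
      unfold u
      rw [le_div_iff₀ (by positivity)]
      calc 2*x^2/5 * (1 - r^2)^2 = 2*((1 - r^2)*x)^2/5 := by ring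
        _ ≤ 2*(1 - Real.cos ((1 - r^2)*x)) := hj
    have hhi : u r x ≤ x^2 := by
      unfold u
      rw [div_le_iff₀ (by positivity)]
      calc 2*(1 - Real.cos ((1 - r^2)*x)) ≤ ((1 - r^2)*x)^2 := cos_low _
        _ = x^2 * (1 - r^2)^2 := by ring
    have hrt : x^2/10 ≤ r^2 * u r x := by nlinarith
    have h1rt : (1:ℝ) ≤ 1 + r^2 * u r x := by nlinarith
    have h1rt0 : (0:ℝ) < 1 + r^2 * u r x := by linarith
    have hDle : (1 + x^2/10)^L ≤ (1 + r^2 * u r x)^L :=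
      Real.rpow_le_rpow (by nlinarith [sq_nonneg x]) (by linarith) hL.le
    have hD1 : (1:ℝ) ≤ (1 + r^2 * u r x)^L := Real.one_le_rpow h1rt hL.le
    rw [F_eq hr2 x]
    have hF0 : 0 ≤ 1/((1 + r^2 * u r x)^L - 1) * (u r x / (1 + r^2 * u r x)) := by
      apply mul_nonneg
      · apply div_nonneg one_pos.le; linarith
      · exact div_nonneg ht0 h1rt0.le
    rw [Real.norm_eq_abs, abs_of_nonneg hF0]
    by_cases hx0 : x = 0
    · subst hx0
      have hu0 : u r 0 = 0 := by unfold u; simp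
      rw [hu0]
      simp only [zero_div, mul_zero]
      exact g_nonneg hL 0
    · have hx2 : (0:ℝ) < x^2 := by positivity
      have hDpos : 0 < (1 + x^2/10)^L - 1 := by
        have h1 : 1 < (1 + x^2/10)^L :=
          (Real.one_lt_rpow_iff_of_pos (by positivity)).2 (Or.inl ⟨by nlinarith, hL⟩)
        linarith
      unfold g
      apply mul_le_mul
      · apply one_div_le_one_div_of_le hDpos
        linarith
      · refine le_min (le_trans (div_le_self ht0 h1rt) hhi) ?_
        rw [div_le_iff₀ h1rt0]
        nlinarith
      · exact div_nonneg ht0 h1rt0.le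
      · exact div_nonneg one_pos.le hDpos.le
  · rw [Set.indicator_of_notMem hx]
    simpa using g_nonneg hL x

lemma FI_tendsto {L : ℝ} (hL : 0 < L) {x : ℝ} (hx : x ≠ 0) :
    Tendsto (fun r => FI L r x) (nhdsWithin 1 (Set.Iio 1)) (nhds (philim L x)) := by
  have hev : Set.Ioo (1/2 : ℝ) 1 ∈ nhdsWithin 1 (Set.Iio 1) :=
    Ioo_mem_nhdsLT (by norm_num)
  have hs_t : Tendsto (fun r : ℝ => 1 - r^2) (nhdsWithin 1 (Set.Iio 1)) (nhds 0) := by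
    have h : Tendsto (fun r : ℝ => 1 - r^2) (nhds 1) (nhds 0) := by
      have h2 := ((continuous_const (y := (1:ℝ))).sub (continuous_pow 2)).tendsto (1:ℝ)
      norm_num at h2
      exact h2
    exact h.mono_left nhdsWithin_le_nhds
  have hsin : Tendsto (fun y : ℝ => Real.sin y / y) (nhdsWithin 0 {(0:ℝ)}ᶜ) (nhds 1) := by
    have h := Real.hasDerivAt_sin 0
    rw [Real.cos_zero, hasDerivAt_iff_tendsto_slope] at h
    have hslope : slope Real.sin 0 = fun y : ℝ => Real.sin y / y := by
      funext y
      rw [slope_def_field]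
      simp
    rwa [hslope] at h
  have hm : Tendsto (fun r : ℝ => (1 - r^2) * x / 2) (nhdsWithin 1 (Set.Iio 1))
      (nhdsWithin 0 {(0:ℝ)}ᶜ) := by
    rw [tendsto_nhdsWithin_iff]
    constructor
    · have h2 := (hs_t.mul_const x).div_const 2
      simpa using h2
    · filter_upwards [hev] with r hr
      have hs : (0:ℝ) < 1 - r^2 := by nlinarith [hr.1, hr.2]
      simp only [Set.mem_compl_iff, Set.mem_singleton_iff]
      exact div_ne_zero (mul_ne_zero hs.ne' hx) two_ne_zero
  have hq : Tendsto (fun r : ℝ => Real.sin ((1 - r^2)*x/2) / ((1 - r^2)*x/2))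
      (nhdsWithin 1 (Set.Iio 1)) (nhds 1) := hsin.comp hm
  have hu : Tendsto (fun r => u r x) (nhdsWithin 1 (Set.Iio 1)) (nhds (x^2)) := by
    have h2 : Tendsto (fun r : ℝ => x^2 * (Real.sin ((1 - r^2)*x/2)/((1 - r^2)*x/2))^2)
        (nhdsWithin 1 (Set.Iio 1)) (nhds (x^2 * 1^2)) := tendsto_const_nhds.mul (hq.pow 2)
    rw [one_pow, mul_one] at h2
    apply h2.congr'
    filter_upwards [hev] with r hr
    have hs : (0:ℝ) < 1 - r^2 := by nlinarith [hr.1, hr.2]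
    unfold u
    have hsin2 : 1 - Real.cos ((1 - r^2)*x) = 2 * Real.sin ((1 - r^2)*x/2)^2 := by
      have h3 := Real.sin_sq_eq_half_sub ((1 - r^2)*x/2)
      have h4 : 2*((1 - r^2)*x/2) = (1 - r^2)*x := by ring
      rw [h4] at h3
      linarith
    rw [hsin2]
    field_simp
  have hr2t : Tendsto (fun r : ℝ => r^2) (nhdsWithin 1 (Set.Iio 1)) (nhds 1) := by
    have h2 := (continuous_pow 2).tendsto (1:ℝ)
    norm_num at h2
    exact h2.mono_left nhdsWithin_le_nhds
  have hbase : Tendsto (fun r => 1 + r^2 * u r x) (nhdsWithin 1 (Set.Iio 1))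
      (nhds (1 + x^2)) := by
    have h2 := (tendsto_const_nhds (x := (1:ℝ))).add (hr2t.mul hu)
    rw [one_mul] at h2
    exact h2
  have hbne : (1:ℝ) + x^2 ≠ 0 := by positivity
  have hpow : Tendsto (fun r => (1 + r^2 * u r x)^L) (nhdsWithin 1 (Set.Iio 1))
      (nhds ((1 + x^2)^L)) := hbase.rpow_const (Or.inl hbne)
  have hx2 : (0:ℝ) < x^2 := by positivity
  have hden_ne : (1 + x^2)^L - 1 ≠ 0 := by
    have h1 : 1 < (1 + x^2)^L :=
      (Real.one_lt_rpow_iff_of_pos (by positivity)).2 (Or.inl ⟨by nlinarith, hL⟩)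
    linarith
  have htarget : Tendsto (fun r => 1/((1 + r^2 * u r x)^L - 1) * (u r x/(1 + r^2 * u r x)))
      (nhdsWithin 1 (Set.Iio 1)) (nhds (philim L x)) := by
    unfold philim
    exact (tendsto_const_nhds.div (hpow.sub tendsto_const_nhds) hden_ne).mul
      (hu.div hbase hbne)
  apply htarget.congr'
  have hsmall : ∀ᶠ r in nhdsWithin 1 (Set.Iio 1), (1 - r^2) < π/|x| :=
    hs_t.eventually_lt_const (by positivity)
  filter_upwards [hev, hsmall] with r hr hsm
  have hr2 : r^2 < 1 := by nlinarith [hr.1, hr.2]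
  have hs : (0:ℝ) < 1 - r^2 := by linarith
  have habs : |x| < π/(1 - r^2) := by
    rw [lt_div_iff₀ hs]
    calc |x| * (1 - r^2) < |x| * (π/|x|) := by
          exact mul_lt_mul_of_pos_left hsm (abs_pos.2 hx)
      _ = π := by field_simp
  have hmem : x ∈ Set.Ioc (-(π/(1 - r^2))) (π/(1 - r^2)) := by
    constructor
    · have h5 := neg_abs_le x
      linarith
    · linarith [le_abs_self x]
  rw [FI, Set.indicator_of_mem hmem, F_eq hr2 x]

lemma g_integrable {L : ℝ} (hL : 1/2 < L) : Integrable (g L) := by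
  have hL0 : (0:ℝ) < L := by linarith
  have hmeas := meas_g L
  have hIoc : IntegrableOn (g L) (Set.Ioc (0:ℝ) 1) := by
    apply Measure.integrableOn_of_bounded (M := 11/L) measure_Ioc_lt_top.ne
      hmeas.aestronglyMeasurable
    rw [MeasureTheory.ae_restrict_iff' measurableSet_Ioc]
    apply MeasureTheory.ae_of_all
    intro x hx
    obtain ⟨hx0, hx1⟩ := hx
    have hx2 : (0:ℝ) < x^2 := by positivity
    have hb := bern (t := x^2/10) hL0 (by positivity)
    have h1 : L * x^2/11 ≤ (1 + x^2/10)^L - 1 := by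
      have h2 : (1:ℝ) + x^2/10 ≤ 11/10 := by nlinarith
      have h3 : L*(x^2/10)/(11/10) ≤ L*(x^2/10)/(1 + x^2/10) :=
        div_le_div_of_nonneg_left (by positivity) (by positivity) h2
      have h4 : L*(x^2/10)/(11/10) = L * x^2/11 := by ring
      linarith [h3.trans hb]
    have hDpos : (0:ℝ) < (1 + x^2/10)^L - 1 := lt_of_lt_of_le (by positivity) h1
    rw [Real.norm_eq_abs, abs_of_nonneg (g_nonneg hL0 x)]
    unfold g
    calc 1/((1 + x^2/10)^L - 1) * min (x^2) 4
        ≤ 1/(L * x^2/11) * min (x^2) 4 := by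
          apply mul_le_mul_of_nonneg_right (one_div_le_one_div_of_le (by positivity) h1)
          exact le_min hx2.le (by norm_num)
      _ ≤ 1/(L * x^2/11) * x^2 := by
          apply mul_le_mul_of_nonneg_left (min_le_left _ _) (by positivity)
      _ = 11/L := by field_simp
  have hIoi1 : IntegrableOn (g L) (Set.Ioi (1:ℝ)) := by
    have hK : (0:ℝ) < 1 - (11/10:ℝ)^(-L) := by
      have := Real.rpow_lt_one_of_one_lt_of_neg (by norm_num : (1:ℝ) < 11/10)
        (by linarith : -L < 0)
      linarith
    have hint : IntegrableOn (fun x : ℝ => x ^ (-(2*L))) (Set.Ioi 1) :=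
      integrableOn_Ioi_rpow_of_lt (by linarith) one_pos
    apply Integrable.mono' (hint.const_mul (4 * (10:ℝ)^L / (1 - (11/10:ℝ)^(-L))))
    · exact hmeas.aestronglyMeasurable.restrict
    · rw [MeasureTheory.ae_restrict_iff' measurableSet_Ioi]
      apply MeasureTheory.ae_of_all
      intro x hx
      have hx1 : (1:ℝ) < x := hx
      have hx0 : (0:ℝ) < x := lt_trans one_pos hx1
      have hx2 : (1:ℝ) ≤ x^2 := by nlinarith
      have hP1 : ((11/10:ℝ))^L ≤ (1 + x^2/10)^L :=
        Real.rpow_le_rpow (by norm_num) (by nlinarith) hL0.le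
      have h10 : (0:ℝ) < (10:ℝ)^L := Real.rpow_pos_of_pos (by norm_num) L
      have hxL : ((x^2/10:ℝ))^L = x^(2*L) / 10^L := by
        rw [Real.div_rpow (by positivity) (by norm_num)]
        congr 1
        rw [← Real.rpow_natCast x 2, ← Real.rpow_mul hx0.le]
        norm_num
      have hP_ge : x^(2*L)/10^L ≤ (1 + x^2/10)^L := by
        rw [← hxL]
        exact Real.rpow_le_rpow (by positivity) (by linarith) hL0.le
      have hxLpos : (0:ℝ) < x^(2*L) := Real.rpow_pos_of_pos hx0 _
      have hPpos : (0:ℝ) < (1 + x^2/10)^L := lt_of_lt_of_le (by positivity) hP_ge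
      have h1leP : (1:ℝ) ≤ (11/10:ℝ)^(-L) * (1 + x^2/10)^L := by
        rw [Real.rpow_neg (by norm_num)]
        rw [inv_mul_eq_div, le_div_iff₀ (Real.rpow_pos_of_pos (by norm_num) L)]
        linarith
      have hDK : (1 - (11/10:ℝ)^(-L)) * (1 + x^2/10)^L ≤ (1 + x^2/10)^L - 1 := by
        nlinarith
      have hKP : (0:ℝ) < (1 - (11/10:ℝ)^(-L)) * (1 + x^2/10)^L := mul_pos hK hPpos
      rw [Real.norm_eq_abs, abs_of_nonneg (g_nonneg hL0 x)]
      have hg1 : g L x ≤ 4 / ((1 - (11/10:ℝ)^(-L)) * (1 + x^2/10)^L) := by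
        unfold g
        have h5 := one_div_le_one_div_of_le hKP hDK
        calc 1/((1 + x^2/10)^L - 1) * min (x^2) 4
            ≤ 1/((1 + x^2/10)^L - 1) * 4 := by
              apply mul_le_mul_of_nonneg_left (min_le_right _ _)
              exact div_nonneg one_pos.le (le_trans hKP.le hDK)
          _ ≤ 1/((1 - (11/10:ℝ)^(-L)) * (1 + x^2/10)^L) * 4 := by
              apply mul_le_mul_of_nonneg_right h5 (by norm_num)
          _ = 4/((1 - (11/10:ℝ)^(-L)) * (1 + x^2/10)^L) := by ring
      have hg2 : 4 / ((1 - (11/10:ℝ)^(-L)) * (1 + x^2/10)^L)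
          ≤ 4 * (10:ℝ)^L / (1 - (11/10:ℝ)^(-L)) * x^(-(2*L)) := by
        have h6 : (1 - (11/10:ℝ)^(-L)) * (x^(2*L)/10^L)
            ≤ (1 - (11/10:ℝ)^(-L)) * (1 + x^2/10)^L :=
          mul_le_mul_of_nonneg_left hP_ge hK.le
        calc 4 / ((1 - (11/10:ℝ)^(-L)) * (1 + x^2/10)^L)
            ≤ 4 / ((1 - (11/10:ℝ)^(-L)) * (x^(2*L)/10^L)) := by
              apply div_le_div_of_nonneg_left (by norm_num) (by positivity) h6
          _ = 4 * (10:ℝ)^L / (1 - (11/10:ℝ)^(-L)) * x^(-(2*L)) := by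
              rw [Real.rpow_neg hx0.le]
              field_simp
      exact le_trans hg1 hg2
  have hIoi : IntegrableOn (g L) (Set.Ioi (0:ℝ)) := by
    apply (hIoc.union hIoi1).mono_set
    intro y hy
    by_cases h : y ≤ 1
    · exact Or.inl ⟨hy, h⟩
    · exact Or.inr (lt_of_not_ge h)
  have hgabs : (fun x : ℝ => g L |x|) = g L := by
    funext x; unfold g; rw [sq_abs]
  rw [← hgabs]
  have hf : IntegrableOn (fun x : ℝ => g L |x|) (Set.Ioi (0:ℝ)) :=
    (integrableOn_congr_fun (fun y hy => by rw [abs_of_pos hy]) measurableSet_Ioi).2 hIoi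
  have int_Iic : IntegrableOn (fun x : ℝ => g L |x|) (Set.Iic 0) := by
    rw [← Measure.map_neg_eq_self (volume : Measure ℝ)]
    have m : MeasurableEmbedding fun x : ℝ => -x := (Homeomorph.neg ℝ).measurableEmbedding
    rw [m.integrableOn_map_iff]
    simp_rw [Function.comp_def, abs_neg, Set.neg_preimage, Set.neg_Iic, neg_zero]
    exact Iff.mpr integrableOn_Ici_iff_integrableOn_Ioi hf
  have htot := int_Iic.union hf
  rwa [Set.Iic_union_Ioi, integrableOn_univ] at htot

end HypAux

open HypAux MeasureTheory Set in
theorem hypIntegral_asymp_of_half_lt (L : ℝ) (hL : 1/2 < L) :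
    Tendsto (fun r : ℝ => hypIntegral L r / (1 - r))
      (nhdsWithin 1 (Set.Iio 1))
      (nhds (4 * ∫ x in Set.Ioi (0:ℝ),
        (1 / ((1 + x^2) ^ L - 1)) * (x^2 / (1 + x^2)))) := by
  have hL0 : (0:ℝ) < L := by linarith
  have hev : Set.Ioo (1/2 : ℝ) 1 ∈ nhdsWithin 1 (Set.Iio 1) :=
    Ioo_mem_nhdsLT (by norm_num)
  have hDCT : Tendsto (fun r => ∫ x, FI L r x) (nhdsWithin 1 (Set.Iio 1))
      (nhds (∫ x, philim L x)) := by
    apply MeasureTheory.tendsto_integral_filter_of_dominated_convergence (g L)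
    · filter_upwards [hev] with r hr
      exact (meas_FI (by nlinarith [hr.1, hr.2] : r^2 < 1)).aestronglyMeasurable
    · filter_upwards [hev] with r hr
      exact MeasureTheory.ae_of_all _ (FI_bound hL0 hr)
    · exact g_integrable hL
    · have h0 : ({(0:ℝ)}ᶜ : Set ℝ) ∈ MeasureTheory.ae MeasureTheory.volume := by
        rw [MeasureTheory.compl_mem_ae_iff]
        exact MeasureTheory.measure_singleton 0
      filter_upwards [h0] with x hx
      exact FI_tendsto hL0 hx
  have hval : (∫ x, philim L x) = 2 * ∫ x in Set.Ioi (0:ℝ), philim L x := by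
    have h := integral_comp_abs (f := philim L)
    have he : (fun x : ℝ => philim L |x|) = fun x => philim L x := by
      funext x; unfold philim; rw [sq_abs]
    rwa [he] at h
  have h2 : Tendsto (fun r : ℝ => 1 + r) (nhdsWithin 1 (Set.Iio 1)) (nhds 2) := by
    have h : Tendsto (fun r : ℝ => 1 + r) (nhds 1) (nhds 2) := by
      have h2 := ((continuous_const (y := (1:ℝ))).add continuous_id).tendsto (1:ℝ)
      norm_num at h2; exact h2
    exact h.mono_left nhdsWithin_le_nhds
  have hmul := h2.mul hDCT
  have hfinal : Tendsto (fun r : ℝ => (1 + r) * ∫ x, FI L r x) (nhdsWithin 1 (Set.Iio 1))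
      (nhds (4 * ∫ x in Set.Ioi (0:ℝ), (1 / ((1 + x^2) ^ L - 1)) * (x^2 / (1 + x^2)))) := by
    convert hmul using 2
    rw [hval]
    unfold philim
    ring
  apply hfinal.congr'
  filter_upwards [hev] with r hr
  have hr01 : r ∈ Set.Ioo (0:ℝ) 1 := ⟨by linarith [hr.1], hr.2⟩
  rw [hyp_eq hr01]
  have h1r : (1:ℝ) - r ≠ 0 := by have := hr.2; intro h; nlinarith [hr.2]
  field_simp
  ring
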